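/- arXiv:1504.03988 — 3 statements merged into one kernel-verified Lean document; each statement's English description precedes it below -/
import Mathlib

section
/- If a_1...a_n is a significant block of a subshift X, then a_1...a_{n-1} is also a significant block of X. -/
open Set Filter Topology

/-- The natural extension of a one-sided subshift: bisequences all of whose
right tails lie in `Xp`. -/
def natExt {A : Type*} (Xp : Set (ℕ → A)) : Set (ℤ → A) :=
  {x | ∀ p : ℤ, (fun n : ℕ => x (p + n)) ∈ Xp}

/-- The bisequence `x` ends at position `0` with the block `w`,
i.e. `w = x_{-(|w|-1)} ... x_0`. -/
def EndsWith {A : Type*} (x : ℤ → A) (w : List A) : Prop :=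
  ∀ i : Fin w.length, x ((i.1 : ℤ) - ((w.length : ℤ) - 1)) = w.get i

/-- The block `w` occurs somewhere in the bisequence `x`. -/
def OccursZ {A : Type*} (w : List A) (x : ℤ → A) : Prop :=
  ∃ p : ℤ, ∀ i : Fin w.length, x (p + i.1) = w.get i

/-- The language of a set of bisequences. -/
def LangZ {A : Type*} (XZ : Set (ℤ → A)) (w : List A) : Prop :=
  ∃ x ∈ XZ, OccursZ w x

/-- The block `w` occurs at position `p` in the one-sided sequence `a`. -/
def OccursAt {A : Type*} (w : List A) (a : ℕ → A) (p : ℕ) : Prop :=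
  ∀ i : Fin w.length, a (p + i.1) = w.get i

/-- The block `w` occurs somewhere in the one-sided sequence `a`. -/
def OccursN {A : Type*} (w : List A) (a : ℕ → A) : Prop :=
  ∃ p : ℕ, OccursAt w a p

/-- The language of a set of one-sided sequences. -/
def LangN {A : Type*} (Xp : Set (ℕ → A)) (w : List A) : Prop :=
  ∃ a ∈ Xp, OccursN w a

/-- The follower set of the block `w` (read as `a_{-n} ... a_0`) in the
two-sided set `XZ`: the right rays `b_0 b_1 ...` of points `b ∈ XZ`
with `b_{-n} ... b_0 = w`. -/
def fol {A : Type*} (XZ : Set (ℤ → A)) (w : List A) : Set (ℕ → A) :=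
  {r | ∃ b ∈ XZ, EndsWith b w ∧ ∀ n : ℕ, r n = b (n : ℤ)}

/-- A block is significant if its follower set strictly decreases when its
first letter is prepended (i.e. `fol w ⊊ fol (w.tail)`). -/
def Significant {A : Type*} (XZ : Set (ℤ → A)) (w : List A) : Prop :=
  w ≠ [] ∧ fol XZ w ⊂ fol XZ w.tail

/-- `SigForm XZ w v` says `v = sig(w)`: `v` is the longest significant suffix
of `w`. -/
def SigForm {A : Type*} (XZ : Set (ℤ → A)) (w v : List A) : Prop :=
  v <:+ w ∧ Significant XZ v ∧
    ∀ v' : List A, v' <:+ w → Significant XZ v' → v'.length ≤ v.length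

/-- Arrow `u → v` of the Hofbauer–Buzzi diagram: both are significant blocks,
`u` extended by the last letter `a` of `v` is in the language, and
`v = sig(u a)`. -/
def Arrow {A : Type*} (XZ : Set (ℤ → A)) (u v : List A) : Prop :=
  Significant XZ u ∧ ∃ a : A, v.getLast? = some a ∧ LangZ XZ (u ++ [a]) ∧
    SigForm XZ (u ++ [a]) v

/-- A (nonempty closed shift-invariant) one-sided subshift. -/
def IsSubshift {A : Type*} [TopologicalSpace A] (Xp : Set (ℕ → A)) : Prop :=
  Xp.Nonempty ∧ IsClosed Xp ∧ ∀ x ∈ Xp, (fun n => x (n + 1)) ∈ Xp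

/-- The complexity function of a one-sided sequence. -/
noncomputable def Complexity {A : Type*} (u : ℕ → A) (n : ℕ) : ℕ :=
  Set.ncard {w : List A | w.length = n ∧ OccursN w u}

/-- The orbit closure of `u` under the shift, described combinatorially:
all sequences each of whose blocks occurs in `u`. -/
def OrbitClosure {A : Type*} (u : ℕ → A) : Set (ℕ → A) :=
  {x | ∀ w : List A, OccursN w x → OccursN w u}

/-- The Prouhet–Thue–Morse sequence: parity of the binary digit sum. -/
def morse (n : ℕ) : Fin 2 := Fin.ofNat 2 ((Nat.digits 2 n).sum : ℕ)

/-! The follower set of `u ++ [a]` is determined by that of `u`: a ray `r` follows `u ++ [a]`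
iff `r 0 = a` and `r`, preceded by one letter, follows `u`. So if `u` were not significant,
i.e. `fol u = fol u.tail`, then `fol (u ++ [a]) = fol (u.tail ++ [a])`, and `u ++ [a]` would not
be significant either. -/

section

variable {A : Type*}

lemma endsWith_iff_getElem {x : ℤ → A} {w : List A} :
    EndsWith x w ↔ ∀ i (hi : i < w.length), x (i - (w.length - 1)) = w[i] := by
  simp only [EndsWith, Fin.forall_iff, List.get_eq_getElem]

lemma endsWith_tail {x : ℤ → A} {w : List A}
    (h : EndsWith x w) : EndsWith x w.tail := by
  rw [endsWith_iff_getElem] at *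
  intro i hi
  rw [List.length_tail] at hi
  rw [List.getElem_tail, ← h (i + 1) (by omega), List.length_tail]
  congr 1
  omega

lemma fol_subset_fol_tail (XZ : Set (ℤ → A)) (w : List A) :
    fol XZ w ⊆ fol XZ w.tail :=
  fun _ ⟨b, hb, hend, hr⟩ => ⟨b, hb, endsWith_tail hend, hr⟩

lemma endsWith_append_singleton (x : ℤ → A) (u : List A) (a : A) :
    EndsWith x (u ++ [a]) ↔ EndsWith (fun k => x (k - 1)) u ∧ x 0 = a := by
  simp only [endsWith_iff_getElem, List.length_append, List.length_singleton, Nat.cast_add,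
    Nat.cast_one, add_sub_cancel_right]
  constructor
  · intro h
    refine ⟨fun i hi => ?_, by simpa using h u.length (by omega)⟩
    have hi' := h i (by omega)
    rw [List.getElem_append_left hi] at hi'
    rw [← hi']
    ring_nf
  · rintro ⟨h, ha⟩ i hi
    rcases Nat.lt_succ_iff_lt_or_eq.mp hi with hi | rfl
    · rw [List.getElem_append_left hi, ← h i hi]
      ring_nf
    · simpa using ha

lemma natExt_comp_add {Xp : Set (ℕ → A)} {x : ℤ → A}
    (hx : x ∈ natExt Xp) (c : ℤ) : (fun k => x (k + c)) ∈ natExt Xp := by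
  intro p
  simpa only [add_right_comm] using hx (p + c)

lemma mem_fol_append_singleton {Xp : Set (ℕ → A)} {u : List A} {a : A}
    {r : ℕ → A} :
    r ∈ fol (natExt Xp) (u ++ [a]) ↔
      r 0 = a ∧ ∃ s ∈ fol (natExt Xp) u, ∀ n, s (n + 1) = r n := by
  constructor
  · rintro ⟨b, hb, hend, hr⟩
    rw [endsWith_append_singleton] at hend
    refine ⟨by rw [hr, Nat.cast_zero, hend.2], _,
      ⟨_, natExt_comp_add hb (-1), hend.1, fun n => rfl⟩, fun n => ?_⟩
    simp [hr]
  · rintro ⟨hr0, s, ⟨c, hc, hend, hs⟩, hsr⟩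
    refine ⟨fun k => c (k + 1), natExt_comp_add hc 1, ?_, fun n => ?_⟩
    · rw [endsWith_append_singleton]
      refine ⟨by simpa using hend, ?_⟩
      simpa [hs] using (hsr 0).trans hr0
    · simp [← hsr, hs]

lemma fol_append_singleton_congr {Xp : Set (ℕ → A)} {u v : List A}
    (h : fol (natExt Xp) u = fol (natExt Xp) v) (a : A) :
    fol (natExt Xp) (u ++ [a]) = fol (natExt Xp) (v ++ [a]) := by
  ext r
  simp only [mem_fol_append_singleton, h]

end

theorem stmt_0_general {A : Type*}
    (Xp : Set (ℕ → A)) (w : List A) (hw : 2 ≤ w.length)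
    (hsig : Significant (natExt Xp) w) :
    Significant (natExt Xp) w.dropLast := by
  obtain ⟨u, a, rfl⟩ := List.eq_nil_or_concat' w |>.resolve_left (by rintro rfl; simp at hw)
  rw [List.length_append, List.length_singleton] at hw
  obtain ⟨b, v, rfl⟩ := List.exists_cons_of_length_pos (by omega : 0 < u.length)
  rw [List.dropLast_concat]
  refine ⟨List.cons_ne_nil b v, (fol_subset_fol_tail _ _).ssubset_of_ne fun h => ?_⟩
  exact hsig.2.ne (fol_append_singleton_congr h a)

/-- If `a_1...a_n` is a significant block of a subshift `X`,
then `a_1...a_{n-1}` is also a significant block of `X`. -/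
theorem stmt_0 {A : Type*} [Fintype A] [TopologicalSpace A] [DiscreteTopology A]
    (Xp : Set (ℕ → A)) (hX : IsSubshift Xp) (w : List A) (hw : 2 ≤ w.length)
    (hsig : Significant (natExt Xp) w) :
    Significant (natExt Xp) w.dropLast :=
  stmt_0_general Xp w hw hsig
end

section
/- Let X be a subshift with HB diagram 𝒟. If α_0 → ⋯ → α_{n-1} and β_0 → ⋯ → β_{n-1} are two paths of length n on 𝒟 whose initial vertices α_0 and β_0 are blocks of length 1, then the projected blocks (formed by reading the last letter of each vertex) are equal if and only if α_i = β_i for all 0 ≤ i ≤ n−1. -/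
/-! The target of an arrow `u → v` is `sig (u ++ [c])`, where `c` is the last letter of `v`;
since `sig` is a function, an arrow is determined by its source and the last letter of its
target. A vertex of length one is determined by its last letter, so induction along the paths
recovers each vertex from the projected block. -/

open Set Filter Topology

section

variable {A : Type*} {XZ : Set (ℤ → A)}

lemma List.eq_of_length_eq_one_of_getLast?_eq {l l' : List A} (hl : l.length = 1)
    (hl' : l'.length = 1) (h : l.getLast? = l'.getLast?) : l = l' := by
  obtain ⟨x, rfl⟩ := List.length_eq_one_iff.mp hl
  obtain ⟨y, rfl⟩ := List.length_eq_one_iff.mp hl'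
  simpa using h

lemma List.IsSuffix.eq_of_isSuffix_of_length_eq {v v' w : List A} (h : v <:+ w) (h' : v' <:+ w)
    (hl : v.length = v'.length) : v = v' :=
  (List.suffix_of_suffix_length_le h h' hl.le).eq_of_length hl

lemma SigForm.unique {w v v' : List A} (h : SigForm XZ w v) (h' : SigForm XZ w v') : v = v' :=
  h.1.eq_of_isSuffix_of_length_eq h'.1 <|
    le_antisymm (h'.2.2 v h.1 h.2.1) (h.2.2 v' h'.1 h'.2.1)

lemma Arrow.eq_of_getLast?_eq {u v v' : List A} (h : Arrow XZ u v) (h' : Arrow XZ u v')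
    (hlast : v.getLast? = v'.getLast?) : v = v' := by
  obtain ⟨-, c, hc, -, hsig⟩ := h
  obtain ⟨-, c', hc', -, hsig'⟩ := h'
  obtain rfl : c = c' := Option.some_inj.mp (hc.symm.trans (hlast.trans hc'))
  exact hsig.unique hsig'

lemma eq_of_arrow_path_of_getLast?_eq {n : ℕ} {α β : ℕ → List A}
    (hα : ∀ i, i + 1 < n → Arrow XZ (α i) (α (i + 1)))
    (hβ : ∀ i, i + 1 < n → Arrow XZ (β i) (β (i + 1))) (h0 : α 0 = β 0)
    (hlast : ∀ i, i < n → (α i).getLast? = (β i).getLast?) :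
    ∀ i, i < n → α i = β i := by
  intro i hi
  induction i with
  | zero => exact h0
  | succ i ih =>
    have hα' := hα i hi
    rw [ih (by omega)] at hα'
    exact hα'.eq_of_getLast?_eq (hβ i hi) (hlast (i + 1) hi)

end

theorem stmt_8_general {A : Type*}
    (Xp : Set (ℕ → A)) (n : ℕ)
    (α β : ℕ → List A) (a b : ℕ → A)
    (hα0 : Significant (natExt Xp) (α 0) ∧ (α 0).length = 1)
    (hβ0 : Significant (natExt Xp) (β 0) ∧ (β 0).length = 1)
    (hαpath : ∀ i : ℕ, i + 1 < n → Arrow (natExt Xp) (α i) (α (i + 1)))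
    (hβpath : ∀ i : ℕ, i + 1 < n → Arrow (natExt Xp) (β i) (β (i + 1)))
    (hαlast : ∀ i : ℕ, i < n → (α i).getLast? = some (a i))
    (hβlast : ∀ i : ℕ, i < n → (β i).getLast? = some (b i)) :
    (∀ i : ℕ, i < n → a i = b i) ↔ (∀ i : ℕ, i < n → α i = β i) := by
  constructor
  · intro hab i hi
    have hlast : ∀ j, j < n → (α j).getLast? = (β j).getLast? := fun j hj => by
      rw [hαlast j hj, hβlast j hj, hab j hj]
    have h0 : α 0 = β 0 :=
      List.eq_of_length_eq_one_of_getLast?_eq hα0.2 hβ0.2 (hlast 0 (by omega))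
    exact eq_of_arrow_path_of_getLast?_eq hαpath hβpath h0 hlast i hi
  · intro hαβ i hi
    rw [← Option.some_inj, ← hαlast i hi, ← hβlast i hi, hαβ i hi]

/-- If `α_0 → ⋯ → α_{n-1}` and `β_0 → ⋯ → β_{n-1}` are two paths
of length `n` on the HB diagram whose initial vertices are blocks of length 1,
then the projected blocks (last letters) are equal iff `α_i = β_i` for all
`0 ≤ i ≤ n-1`. -/
theorem stmt_8 {A : Type*} [Fintype A] [TopologicalSpace A] [DiscreteTopology A]
    (Xp : Set (ℕ → A)) (hX : IsSubshift Xp) (n : ℕ) (hn : 1 ≤ n)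
    (α β : ℕ → List A) (a b : ℕ → A)
    (hα0 : Significant (natExt Xp) (α 0) ∧ (α 0).length = 1)
    (hβ0 : Significant (natExt Xp) (β 0) ∧ (β 0).length = 1)
    (hαpath : ∀ i : ℕ, i + 1 < n → Arrow (natExt Xp) (α i) (α (i + 1)))
    (hβpath : ∀ i : ℕ, i + 1 < n → Arrow (natExt Xp) (β i) (β (i + 1)))
    (hαlast : ∀ i : ℕ, i < n → (α i).getLast? = some (a i))
    (hβlast : ∀ i : ℕ, i < n → (β i).getLast? = some (b i)) :
    (∀ i : ℕ, i < n → a i = b i) ↔ (∀ i : ℕ, i < n → α i = β i) :=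
  stmt_8_general Xp n α β a b hα0 hβ0 hαpath hβpath hαlast hβlast
end

section
/- If X⁺ is a one-sided subshift such that its natural extension X̃ is infinite and minimal, then the eventually Markov part of X̃ is empty: no point x ∈ X̃ is eventually Markov at any time p ∈ ℤ. -/
open Set Filter Topology

/-!
Suppose `x` is eventually Markov at time `p`, from the block `w = x_{p-N} ... x_p` on. By
minimality `w` recurs at some time `p - d` to the left. Eventual Markovness means that every ray
following `w` can be glued to the entire past of `x`. Gluing the ray of `x` at `p - d` and then
iterating (each glued point again has `w` ending at time `p - d`) produces, in the limit, the past
of `x` followed by the `d`-periodic repetition of `x_{p-d+1} ... x_p`; shifting far to the left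
yields a `d`-periodic point of `X̃`. By minimality `X̃` is then the finite orbit of that point.
-/

section NatExt

variable {A : Type*} {Xp : Set (ℕ → A)}

lemma isClosed_natExt [TopologicalSpace A] (hXp : IsClosed Xp) : IsClosed (natExt Xp) := by
  have : natExt Xp = ⋂ t : ℤ, (fun y : ℤ → A => fun n : ℕ => y (t + n)) ⁻¹' Xp := by
    ext y; simp [natExt]
  rw [this]
  exact isClosed_iInter fun t => hXp.preimage (continuous_pi fun n => continuous_apply _)

lemma shift_mem_natExt {x : ℤ → A} (hx : x ∈ natExt Xp) (n : ℤ) :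
    (fun k => x (k + n)) ∈ natExt Xp := by
  intro t
  convert hx (t + n) using 2 with i
  ring_nf

lemma mem_natExt_of_forall_exists_eqOn_Ici {y : ℤ → A}
    (h : ∀ t, ∃ b ∈ natExt Xp, EqOn y b (Ici t)) : y ∈ natExt Xp := by
  intro t
  obtain ⟨b, hb, hyb⟩ := h t
  convert hb t using 2 with n
  exact hyb (show t ≤ t + n by omega)

lemma Function.Periodic.mem_natExt_of_eqOn_Ioi {π z : ℤ → A} {d : ℕ} {p : ℤ}
    (hπ : Function.Periodic π d) (hd : 0 < d) (hz : z ∈ natExt Xp)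
    (hπz : EqOn π z (Ioi p)) : π ∈ natExt Xp := by
  refine mem_natExt_of_forall_exists_eqOn_Ici fun t => ?_
  set M : ℕ := (p - t).toNat + 1
  have hMd : (M : ℤ) ≤ M * d := le_mul_of_one_le_right (by positivity) (by exact_mod_cast hd)
  refine ⟨_, shift_mem_natExt hz (M * d), fun k (hk : t ≤ k) => ?_⟩
  rw [← hπz (show p < k + M * d by omega), hπ.nat_mul M]

lemma Function.Periodic.finite_shifts {y : ℤ → A} {d : ℕ} (hy : Function.Periodic y d)
    (hd : 0 < d) : {z | ∃ n : ℤ, z = fun k => y (k + n)}.Finite := by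
  refine ((Set.finite_Iio d).image fun j : ℕ => fun k => y (k + j)).subset ?_
  rintro _ ⟨n, rfl⟩
  have hnonneg : 0 ≤ n % d := Int.emod_nonneg n (by omega)
  have hlt := Int.emod_lt_of_pos n (by omega : (0 : ℤ) < d)
  refine ⟨(n % d).toNat, Set.mem_Iio.2 (by omega), funext fun k => ?_⟩
  show y (k + ((n % d).toNat : ℤ)) = y (k + n)
  rw [Int.toNat_of_nonneg hnonneg, ← hy.int_mul (n / d) (k + n % d)]
  congr 1
  have := Int.emod_add_mul_ediv n d
  push_cast
  linarith

end NatExt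

lemma IsClosed.mem_of_forall_eventually_eq {ι X : Type*} [TopologicalSpace X]
    {s : Set (ι → X)} (hs : IsClosed s) {f : ℕ → ι → X} {y : ι → X} (hf : ∀ m, f m ∈ s)
    (h : ∀ i, ∀ᶠ m in atTop, f m i = y i) : y ∈ s :=
  hs.mem_of_tendsto (tendsto_pi_nhds.2 fun i => tendsto_nhds_of_eventually_eq (h i))
    (Eventually.of_forall hf)

lemma exists_return_left {A : Type*} [TopologicalSpace A] [DiscreteTopology A]
    {X : Set (ℤ → A)} (hX : IsCompact X) (hshift : ∀ y ∈ X, ∀ n : ℤ, (fun k => y (k + n)) ∈ X)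
    (hmin : ∀ y ∈ X, X ⊆ closure {z | ∃ n : ℤ, z = fun k => y (k + n)})
    {x : ℤ → A} (hx : x ∈ X) {F : Set ℤ} (hF : F.Finite) (L : ℕ) :
    ∃ m ≥ L, ∀ i ∈ F, x (i - m) = x i := by
  -- `x` is close to a shift of a cluster point `z` of its backward orbit, and `z` is close to
  -- backward shifts of `x` arbitrarily far out.
  set g : ℕ → ℤ → A := fun m k => x (k - m)
  obtain ⟨z, hzX, hz⟩ := hX.exists_mapClusterPt (f := atTop) (u := g) <| by
    rw [le_principal_iff, mem_map]
    exact Eventually.of_forall fun m => by simpa [g, sub_eq_add_neg] using hshift x hx (-m)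
  obtain ⟨_, hxz, n, rfl⟩ := mem_closure_iff.1 (hmin z hzX hx) (F.pi fun i => {x i})
    (isOpen_set_pi hF fun _ _ => isOpen_discrete _) fun i _ => rfl
  have hV : ((· + n) '' F).pi (fun i => {z i}) ∈ 𝓝 z :=
    (isOpen_set_pi (hF.image _) fun _ _ => isOpen_discrete _).mem_nhds fun i _ => rfl
  obtain ⟨m, hgm, hm⟩ :=
    ((hz.frequently hV).and_eventually (eventually_ge_atTop (L + n.toNat))).exists
  have hmn : (((m - n).toNat : ℕ) : ℤ) = m - n := Int.toNat_of_nonneg (by omega)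
  refine ⟨(m - n).toNat, by omega, fun i hi => ?_⟩
  have := hgm (i + n) ⟨i, hi, rfl⟩
  simp only [g, Set.mem_singleton_iff] at this
  rw [hmn, show i - (m - n) = i + n - m by ring, this]
  exact hxz i hi

section EventuallyMarkov

variable {A : Type*} {Xp : Set (ℕ → A)} {x : ℤ → A} {p : ℤ}

def pastBlock (x : ℤ → A) (p : ℤ) (n : ℕ) : List A :=
  List.ofFn fun i : Fin (n + 1) => x (p - n + i.1)

/-- `r 0` is discarded: a ray in `fol X w` starts with the last letter of `w`. -/
def glue (x : ℤ → A) (p : ℤ) (r : ℕ → A) : ℤ → A :=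
  fun k => if k ≤ p then x k else r (k - p).toNat

lemma endsWith_pastBlock_iff {b : ℤ → A} {n : ℕ} :
    EndsWith b (pastBlock x p n) ↔ ∀ j ≤ n, b (-j) = x (p - j) := by
  simp only [EndsWith, pastBlock, List.length_ofFn, List.get_ofFn, Fin.forall_iff, Fin.cast]
  constructor
  · intro h j hj
    convert h (n - j) (by omega) using 2 <;> push_cast [hj] <;> ring
  · intro h i hi
    convert h (n - i) (by omega) using 2 <;> push_cast [Nat.le_of_lt_succ hi] <;> ring

lemma mem_fol_pastBlock_iff {X : Set (ℤ → A)} {n : ℕ} {r : ℕ → A} :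
    r ∈ fol X (pastBlock x p n) ↔
      ∃ b ∈ X, (∀ j ≤ n, b (-j) = x (p - j)) ∧ ∀ k : ℕ, r k = b k := by
  simp only [fol, Set.mem_ofPred_eq, endsWith_pastBlock_iff]

lemma ray_mem_fol_pastBlock {y : ℤ → A} {q : ℤ} {n : ℕ} (hy : y ∈ natExt Xp)
    (hyx : ∀ j ≤ n, y (q - j) = x (p - j)) :
    (fun k : ℕ => y (q + k)) ∈ fol (natExt Xp) (pastBlock x p n) :=
  mem_fol_pastBlock_iff.2 ⟨_, shift_mem_natExt hy q,
    fun j hj => by simpa only [neg_add_eq_sub] using hyx j hj, fun k => by rw [add_comm]⟩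

lemma glue_mem_natExt {N : ℕ}
    (hM : ∀ n ≥ N, fol (natExt Xp) (pastBlock x p n) = fol (natExt Xp) (pastBlock x p N))
    {r : ℕ → A} (hr : r ∈ fol (natExt Xp) (pastBlock x p N)) :
    glue x p r ∈ natExt Xp := by
  refine mem_natExt_of_forall_exists_eqOn_Ici fun t => ?_
  rw [← hM (N + (p - t).toNat) (by omega), mem_fol_pastBlock_iff] at hr
  obtain ⟨b, hb, hpast, hray⟩ := hr
  refine ⟨fun k => b (k + -p), shift_mem_natExt hb (-p), fun k (hk : t ≤ k) => ?_⟩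
  simp only [glue]
  split_ifs with hkp
  · have := hpast (p - k).toNat (by omega)
    rw [Int.toNat_of_nonneg (by omega)] at this
    rw [show k + -p = -(p - k) by ring, this, sub_sub_cancel]
  · rw [hray, Int.toNat_of_nonneg (by omega), sub_eq_add_neg]

def returnMap (x : ℤ → A) (p : ℤ) (d : ℕ) (r : ℕ → A) : ℕ → A :=
  fun k => glue x p r (p - d + k)

lemma returnMap_iterate_mem_fol {N d : ℕ} (hx : x ∈ natExt Xp)
    (hM : ∀ n ≥ N, fol (natExt Xp) (pastBlock x p n) = fol (natExt Xp) (pastBlock x p N))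
    (hret : ∀ j ≤ N, x (p - d - j) = x (p - j)) (m : ℕ) :
    (returnMap x p d)^[m] (fun k => x (p - d + k)) ∈ fol (natExt Xp) (pastBlock x p N) := by
  induction m with
  | zero => exact ray_mem_fol_pastBlock hx hret
  | succ m ih =>
    rw [Function.iterate_succ_apply']
    refine ray_mem_fol_pastBlock (glue_mem_natExt hM ih) fun j hj => ?_
    rw [glue, if_pos (by omega), hret j hj]

lemma returnMap_iterate_apply {d : ℕ} (hxd : x (p - d) = x p) (r : ℕ → A) {m k : ℕ}
    (hk : k < m * d) : (returnMap x p d)^[m] r k = x (p - d + (k % d : ℕ)) := by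
  induction m generalizing k with
  | zero => simp at hk
  | succ m ih =>
    rw [Nat.succ_mul] at hk
    rw [Function.iterate_succ_apply', returnMap, glue]
    split_ifs with hkd
    · rcases (show k < d ∨ k = d by omega) with hkd | rfl
      · rw [Nat.mod_eq_of_lt hkd]
      · rw [Nat.mod_self, Nat.cast_zero, add_zero, hxd, sub_add_cancel]
    · rw [show (p - d + k - p).toNat = k - d by omega, ih (by omega),
        ← Nat.mod_eq_sub_mod (by omega)]

lemma exists_periodic_mem_natExt_of_return [TopologicalSpace A] (hXp : IsClosed Xp)
    (hx : x ∈ natExt Xp) {N d : ℕ}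
    (hM : ∀ n ≥ N, fol (natExt Xp) (pastBlock x p n) = fol (natExt Xp) (pastBlock x p N))
    (hd : 0 < d) (hret : ∀ j ≤ N, x (p - d - j) = x (p - j)) :
    ∃ π ∈ natExt Xp, Function.Periodic π d := by
  have hxd : x (p - d) = x p := by simpa using hret 0 N.zero_le
  set ρ : ℕ → A := fun k => x (p - d + (k % d : ℕ))
  have hz : glue x p ρ ∈ natExt Xp := by
    refine (isClosed_natExt hXp).mem_of_forall_eventually_eq
      (fun m => glue_mem_natExt hM (returnMap_iterate_mem_fol hx hM hret m)) fun k => ?_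
    filter_upwards [eventually_gt_atTop (k - p).toNat] with m hm
    simp only [glue]
    split_ifs
    · rfl
    · exact returnMap_iterate_apply hxd _ (hm.trans_le (Nat.le_mul_of_pos_right m hd))
  have hπ : Function.Periodic (fun k => x (p - d + (k - p) % d)) d := fun k => by
    simp only [add_sub_right_comm k, Int.add_emod_right]
  refine ⟨_, hπ.mem_natExt_of_eqOn_Ioi (p := p) hd hz fun k (hk : p < k) => ?_, hπ⟩
  simp only [glue, if_neg (not_le.2 hk), ρ, Int.natCast_mod,
    Int.toNat_of_nonneg (sub_nonneg.2 hk.le)]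

end EventuallyMarkov

/-- If `X⁺` is a one-sided subshift whose natural extension `X̃`
is infinite and minimal, then no point of `X̃` is eventually Markov at any
time `p ∈ ℤ`. -/
theorem stmt_13 {A : Type*} [Fintype A] [TopologicalSpace A] [DiscreteTopology A]
    (Xp : Set (ℕ → A)) (hX : IsSubshift Xp)
    (hinf : (natExt Xp).Infinite)
    (hmin : ∀ x ∈ natExt Xp,
      natExt Xp ⊆ closure {y : ℤ → A | ∃ n : ℤ, y = fun k => x (k + n)}) :
    ∀ x ∈ natExt Xp, ∀ p : ℤ,
      ¬ ∃ N : ℕ, ∀ n : ℕ, N ≤ n →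
        fol (natExt Xp) (List.ofFn (fun i : Fin (n + 1) => x (p - n + i.1))) =
        fol (natExt Xp) (List.ofFn (fun i : Fin (N + 1) => x (p - N + i.1))) := by
  rintro x hx p ⟨N, hM⟩
  obtain ⟨d, hd, hret⟩ := exists_return_left (isClosed_natExt hX.2.1).isCompact
    (fun _ hy => shift_mem_natExt hy) hmin hx (finite_Icc (p - N) p) 1
  obtain ⟨π, hπ, hper⟩ := exists_periodic_mem_natExt_of_return hX.2.1 hx hM hd
    fun j hj => by rw [sub_right_comm]; exact hret _ ⟨by omega, by omega⟩
  have hfin := hper.finite_shifts hd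
  exact hinf (hfin.subset ((hmin π hπ).trans hfin.isClosed.closure_subset))
end
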